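/- (Soundness of the continuous-time stabilization SDP.) Let X₋, X_δ ∈ ℝ^{n×T}, U ∈ ℝ^{m×T}, Θdata ∈ ℝ^{L×T}, and Φ ∈ S^{n+T} with blocks Φ₁₁ ∈ S^n, Φ₁₂ ∈ ℝ^{n×T}, Φ₂₂ ∈ S^T. Let H ∈ ℝ^{(Ln+m)×T} stack the column-wise Khatri–Rao product Θdata ⊗_col X₋ above U, and Ψ = RΦRᵀ with R = [I_n, X_δ; 0, −H]. Let Σ_D(Φ) be the set of plants (A_1,…,A_L,B) whose discrepancy W = X_δ − [A_1,…,A_L,B] H satisfies Φ₁₁ + WΦ₁₂ᵀ + Φ₁₂Wᵀ + WΦ₂₂Wᵀ ⪰ 0. Let Ω = {ω_1,…,ω_{N_v}} ⊂ ℝ^L. Suppose there exist a symmetric positive definite P ∈ ℝ^{n×n}, and for each v = 1,…,N_v matrices S_v ∈ ℝ^{m×n} and scalars α_v ≥ 0, β_v > 0, such that the symmetric (n+Ln+m)×(n+Ln+m) matrix with blocks (1,1) = −β_v I_n, (2,1) = −ω_v ⊗ P (stacking −(ω_v)_ℓ P), (3,1) = −S_v, remaining blocks zero, minus α_v Ψ,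 is positive semidefinite. Set K_v = S_v P⁻¹. Then for every plant (A_1,…,A_L,B) ∈ Σ_D(Φ), every θ ∈ conv(Ω), and every c ∈ ℝ^{N_v} with c_v ≥ 0, Σ_v c_v = 1, Σ_v c_v ω_v = θ, the matrix −((A(θ) + B K(θ))P + P(A(θ) + B K(θ))ᵀ) is positive definite, where A(θ) = Σ_ℓ θ_ℓ A_ℓ and K(θ) = Σ_v c_v K_v. Hence the gain-scheduled controller u = K(θ)x quadratically stabilizes every consistent LPV plant with common Lyapunov matrix P⁻¹. -/

import Mathlib

open Matrix

/-- The data matrix `H ∈ ℝ^{(Ln+m)×T}`: the column-wise Khatri–Rao product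
`Θdata ⊗_col X₋` stacked above `U`. -/
def dataH {n m L T : ℕ} (Θd : Matrix (Fin L) (Fin T) ℝ)
    (Xm : Matrix (Fin n) (Fin T) ℝ) (U : Matrix (Fin m) (Fin T) ℝ) :
    Matrix (Fin L × Fin n ⊕ Fin m) (Fin T) ℝ :=
  Matrix.of fun r t => Sum.elim (fun li => Θd li.1 t * Xm li.2 t) (fun j => U j t) r

/-- The plant matrix `Z = [A₁, …, A_L, B] ∈ ℝ^{n×(Ln+m)}`. -/
def plantZ {n m L : ℕ} (A : Fin L → Matrix (Fin n) (Fin n) ℝ)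
    (B : Matrix (Fin n) (Fin m) ℝ) : Matrix (Fin n) (Fin L × Fin n ⊕ Fin m) ℝ :=
  Matrix.of fun i r => Sum.elim (fun li => A li.1 i li.2) (fun j => B i j) r

/-- The matrix `Ψ = RΦRᵀ` with `R = [I, X_δ; 0, -H]`. -/
noncomputable def psiMat {n m L T : ℕ}
    (Xm Xδ : Matrix (Fin n) (Fin T) ℝ) (U : Matrix (Fin m) (Fin T) ℝ)
    (Θd : Matrix (Fin L) (Fin T) ℝ)
    (Φ11 : Matrix (Fin n) (Fin n) ℝ) (Φ12 : Matrix (Fin n) (Fin T) ℝ)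
    (Φ22 : Matrix (Fin T) (Fin T) ℝ) :
    Matrix (Fin n ⊕ (Fin L × Fin n ⊕ Fin m)) (Fin n ⊕ (Fin L × Fin n ⊕ Fin m)) ℝ :=
  Matrix.fromBlocks (1 : Matrix (Fin n) (Fin n) ℝ) Xδ 0 (-(dataH Θd Xm U)) * Matrix.fromBlocks Φ11 Φ12 Φ12ᵀ Φ22
    * (Matrix.fromBlocks (1 : Matrix (Fin n) (Fin n) ℝ) Xδ 0 (-(dataH Θd Xm U)))ᵀ

/-- The matrix `[-(ω_v) ⊗ P; -S_v]` stacking the blocks `-(ω_v)_ℓ P` above `-S_v`. -/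
def contStack {n m L : ℕ} (ω : Fin L → ℝ) (P : Matrix (Fin n) (Fin n) ℝ)
    (S : Matrix (Fin m) (Fin n) ℝ) : Matrix (Fin L × Fin n ⊕ Fin m) (Fin n) ℝ :=
  Matrix.of fun r j => Sum.elim (fun li => -(ω li.1 * P li.2 j)) (fun i => -(S i j)) r

/-!
Conjugating the vertex LMI by `[I, Z]`, with `Z = [A₁, …, A_L, B]`, turns `Ψ` into the noise
quadratic form evaluated at the discrepancy `W = X_δ - Z H`, which is `⪰ 0` for every consistent
plant, and turns the block part into `-β_v I - (Q_v + Q_vᵀ)` with `Q_v = A(ω_v) P + B S_v`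
(S-procedure). Hence `-(Q_v + Q_vᵀ) ≻ 0` at every vertex, and `(A(θ) + B K(θ)) P = ∑ c_v Q_v` is
the convex combination of these with the interpolating weights.
-/

namespace Matrix

variable {n ι κ : Type*} [Fintype ι]

theorem fromCols_one_mul_fromBlocks_mul_transpose [Fintype n] [DecidableEq n] {R : Type*}
    [CommRing R]     (W : Matrix n ι R) (A : Matrix n n R) (B : Matrix n ι R) (C : Matrix ι n R)
    (D : Matrix ι ι R) :
    fromCols (1 : Matrix n n R) W * fromBlocks A B C D * (fromCols (1 : Matrix n n R) W)ᵀ =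
      A + W * C + B * Wᵀ + W * D * Wᵀ := by
  rw [fromCols_mul_fromBlocks, transpose_fromCols, transpose_one, fromCols_mul_fromRows]
  simp only [Matrix.one_mul, Matrix.mul_one, Matrix.add_mul]
  abel

theorem fromCols_one_mul_fromBlocks_one_zero_neg [Fintype n] [DecidableEq n] {R : Type*}
    [CommRing R]     (Z : Matrix n ι R) (X : Matrix n κ R) (H : Matrix ι κ R) :
    fromCols (1 : Matrix n n R) Z * fromBlocks 1 X 0 (-H) =
      fromCols (1 : Matrix n n R) (X - Z * H) := by
  rw [fromCols_mul_fromBlocks]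
  simp [sub_eq_add_neg]

theorem posDef_of_posSemidef_sub_smul_one [DecidableEq n] {M : Matrix n n ℝ} {β : ℝ}
    (hβ : 0 < β) (hM : (M - β • 1).PosSemidef) : M.PosDef := by
  simpa using PosDef.posSemidef_add hM (PosDef.one.smul hβ)

theorem posDef_sum_smul {F : ι → Matrix n n ℝ} {c : ι → ℝ}
    (hF : ∀ i, (F i).PosDef) (hc : ∀ i, 0 ≤ c i) (hc1 : ∑ i, c i = 1) :
    (∑ i, c i • F i).PosDef := by
  classical
  obtain ⟨i, -, hi⟩ := Finset.exists_ne_zero_of_sum_ne_zero (hc1 ▸ one_ne_zero)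
  rw [← Finset.add_sum_erase _ _ (Finset.mem_univ i)]
  exact ((hF i).smul (lt_of_le_of_ne (hc i) (Ne.symm hi))).add_posSemidef
    (posSemidef_sum _ fun j _ => (hF j).posSemidef.smul (hc j))

/-- S-procedure: conjugate by `[1, Z]` and drop the term `α • [1, Z] Ψ [1, Z]ᵀ ⪰ 0`. -/
theorem posDef_mul_add_transpose_of_posSemidef_fromBlocks_sub_smul [Fintype n]
    [DecidableEq n] (Z : Matrix n ι ℝ) (C : Matrix ι n ℝ) (Ψ : Matrix (n ⊕ ι) (n ⊕ ι) ℝ)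
    {α β : ℝ} (hα : 0 ≤ α) (hβ : 0 < β)
    (hM : (fromBlocks (-(β • 1)) Cᵀ C 0 - α • Ψ).PosSemidef)
    (hΨ : (fromCols (1 : Matrix n n ℝ) Z * Ψ *
      (fromCols (1 : Matrix n n ℝ) Z)ᵀ).PosSemidef) :
    (Z * C + (Z * C)ᵀ).PosDef := by
  refine posDef_of_posSemidef_sub_smul_one hβ ?_
  have hconj :=
    (hM.mul_mul_conjTranspose_same (fromCols (1 : Matrix n n ℝ) Z)).add (hΨ.smul hα)
  rw [conjTranspose_eq_transpose_of_trivial, Matrix.mul_sub, Matrix.sub_mul, Matrix.mul_smul,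
    Matrix.smul_mul, fromCols_one_mul_fromBlocks_mul_transpose, sub_add_cancel] at hconj
  convert hconj using 1
  simp only [Matrix.mul_zero, Matrix.zero_mul, add_zero, transpose_mul]
  abel

end Matrix

theorem fromCols_one_mul_psiMat_mul_transpose {n m L T : ℕ} (Xm Xδ : Matrix (Fin n) (Fin T) ℝ)
    (U : Matrix (Fin m) (Fin T) ℝ) (Θd : Matrix (Fin L) (Fin T) ℝ)
    (Φ11 : Matrix (Fin n) (Fin n) ℝ) (Φ12 : Matrix (Fin n) (Fin T) ℝ)
    (Φ22 : Matrix (Fin T) (Fin T) ℝ) (Z : Matrix (Fin n) (Fin L × Fin n ⊕ Fin m) ℝ) :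
    fromCols (1 : Matrix (Fin n) (Fin n) ℝ) Z * psiMat Xm Xδ U Θd Φ11 Φ12 Φ22 *
      (fromCols (1 : Matrix (Fin n) (Fin n) ℝ) Z)ᵀ =
      Φ11 + (Xδ - Z * dataH Θd Xm U) * Φ12ᵀ + Φ12 * (Xδ - Z * dataH Θd Xm U)ᵀ
        + (Xδ - Z * dataH Θd Xm U) * Φ22 * (Xδ - Z * dataH Θd Xm U)ᵀ := by
  rw [psiMat, ← fromCols_one_mul_fromBlocks_mul_transpose,
    ← fromCols_one_mul_fromBlocks_one_zero_neg, transpose_mul]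
  simp only [Matrix.mul_assoc]

theorem plantZ_mul_contStack {n m L : ℕ} (A : Fin L → Matrix (Fin n) (Fin n) ℝ)
    (B : Matrix (Fin n) (Fin m) ℝ) (w : Fin L → ℝ) (P : Matrix (Fin n) (Fin n) ℝ)
    (S : Matrix (Fin m) (Fin n) ℝ) :
    plantZ A B * contStack w P S = -((∑ ℓ, w ℓ • A ℓ) * P + B * S) := by
  ext i j
  simp only [plantZ, contStack, mul_apply, of_apply, Fintype.sum_sum_type, Sum.elim_inl,
    Sum.elim_inr, Fintype.sum_prod_type, Matrix.neg_apply, Matrix.add_apply, Matrix.sum_apply,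
    Matrix.smul_apply, smul_eq_mul, Finset.sum_mul, mul_neg, Finset.sum_neg_distrib, neg_add]
  simp only [mul_left_comm, mul_assoc]

theorem interpolated_closedLoop_mul_eq_sum_smul {n m Λ ι : Type*} [Fintype n] [DecidableEq n]
    [Fintype m] [Fintype Λ] [Fintype ι] (A : Λ → Matrix n n ℝ) (B : Matrix n m ℝ)
    (ω : ι → Λ → ℝ) (S : ι → Matrix m n ℝ) (c : ι → ℝ) {P : Matrix n n ℝ}
    (hP : IsUnit P) :
    ((∑ ℓ, (∑ v, c v • ω v) ℓ • A ℓ) + B * ∑ v, c v • (S v * P⁻¹)) * P =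
      ∑ v, c v • ((∑ ℓ, ω v ℓ • A ℓ) * P + B * S v) := by
  simp only [Matrix.add_mul, Matrix.sum_mul, Matrix.mul_assoc, Matrix.smul_mul, Matrix.mul_sum,
    Matrix.mul_smul, nonsing_inv_mul P ((isUnit_iff_isUnit_det P).mp hP), Matrix.mul_one,
    smul_add, Finset.sum_add_distrib, Finset.sum_apply, Pi.smul_apply, smul_eq_mul,
    Finset.sum_smul, Finset.smul_sum, smul_smul]
  rw [Finset.sum_comm]

theorem stmt15_general {n m L T Nv : ℕ}
    (Xm Xδ : Matrix (Fin n) (Fin T) ℝ) (U : Matrix (Fin m) (Fin T) ℝ)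
    (Θd : Matrix (Fin L) (Fin T) ℝ)
    (Φ11 : Matrix (Fin n) (Fin n) ℝ) (Φ12 : Matrix (Fin n) (Fin T) ℝ)
    (Φ22 : Matrix (Fin T) (Fin T) ℝ)
    (ω : Fin Nv → (Fin L → ℝ))
    (P : Matrix (Fin n) (Fin n) ℝ) (hP : P.PosDef)
    (S : Fin Nv → Matrix (Fin m) (Fin n) ℝ)
    (α β : Fin Nv → ℝ) (hα : ∀ v, 0 ≤ α v) (hβ : ∀ v, 0 < β v)
    (hLMI : ∀ v : Fin Nv,
      (Matrix.fromBlocks (-(β v • (1 : Matrix (Fin n) (Fin n) ℝ)))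
          (contStack (ω v) P (S v))ᵀ (contStack (ω v) P (S v)) 0
        - α v • psiMat Xm Xδ U Θd Φ11 Φ12 Φ22).PosSemidef) :
    ∀ (A : Fin L → Matrix (Fin n) (Fin n) ℝ) (B : Matrix (Fin n) (Fin m) ℝ),
      (Φ11 + (Xδ - plantZ A B * dataH Θd Xm U) * Φ12ᵀ
          + Φ12 * (Xδ - plantZ A B * dataH Θd Xm U)ᵀ
          + (Xδ - plantZ A B * dataH Θd Xm U) * Φ22
            * (Xδ - plantZ A B * dataH Θd Xm U)ᵀ).PosSemidef →
      ∀ θ ∈ convexHull ℝ (Set.range ω), ∀ c : Fin Nv → ℝ,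
        (∀ v, 0 ≤ c v) → (∑ v, c v) = 1 → (∑ v, c v • ω v) = θ →
        (-(((∑ ℓ, θ ℓ • A ℓ) + B * (∑ v, c v • (S v * P⁻¹))) * P
            + P * ((∑ ℓ, θ ℓ • A ℓ) + B * (∑ v, c v • (S v * P⁻¹)))ᵀ)).PosDef := by
  intro A B hconsistent θ _ c hc hc1 hθ
  subst hθ
  set Q : Fin Nv → Matrix (Fin n) (Fin n) ℝ := fun v => (∑ ℓ, ω v ℓ • A ℓ) * P + B * S v
  have hvertex : ∀ v, (-(Q v + (Q v)ᵀ)).PosDef := fun v => by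
    have h := posDef_mul_add_transpose_of_posSemidef_fromBlocks_sub_smul (plantZ A B)
      (contStack (ω v) P (S v)) _ (hα v) (hβ v) (hLMI v)
      (by rwa [fromCols_one_mul_psiMat_mul_transpose])
    rwa [plantZ_mul_contStack, transpose_neg, ← neg_add] at h
  have hPt : Pᵀ = P := by
    simpa [conjTranspose_eq_transpose_of_trivial] using hP.isHermitian.eq
  set M := (∑ ℓ, (∑ v, c v • ω v) ℓ • A ℓ) + B * ∑ v, c v • (S v * P⁻¹)
  have hMP : M * P = ∑ v, c v • Q v :=
    interpolated_closedLoop_mul_eq_sum_smul A B ω S c hP.isUnit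
  have hPM : P * Mᵀ = (M * P)ᵀ := by rw [transpose_mul, hPt]
  rw [hPM, hMP]
  convert posDef_sum_smul hvertex hc hc1 using 1
  simp only [transpose_sum, transpose_smul, ← Finset.sum_add_distrib, smul_neg, smul_add,
    Finset.sum_neg_distrib]

/-- soundness of the continuous-time stabilization SDP, Eq. (27) of
the paper. If the vertex LMIs `[-β_v I, *, *; -ω_v⊗P, 0, *; -S_v, 0, 0] - α_v Ψ ⪰ 0`
are feasible with `P ≻ 0`, `α_v ≥ 0`, `β_v > 0`, then with `K_v = S_v P⁻¹` the
gain-scheduled controller quadratically stabilizes every consistent LPV plant: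
`-((A(θ) + BK(θ))P + P(A(θ) + BK(θ))ᵀ) ≻ 0` for all plants in `Σ_D(Φ)`, all
`θ ∈ conv(Ω)`, and all interpolating coefficients `c`. -/
theorem stmt15 {n m L T Nv : ℕ}
    (Xm Xδ : Matrix (Fin n) (Fin T) ℝ) (U : Matrix (Fin m) (Fin T) ℝ)
    (Θd : Matrix (Fin L) (Fin T) ℝ)
    (Φ11 : Matrix (Fin n) (Fin n) ℝ) (Φ12 : Matrix (Fin n) (Fin T) ℝ)
    (Φ22 : Matrix (Fin T) (Fin T) ℝ) (h11 : Φ11.IsSymm) (h22 : Φ22.IsSymm)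
    (ω : Fin Nv → (Fin L → ℝ))
    (P : Matrix (Fin n) (Fin n) ℝ) (hPs : P.IsSymm) (hP : P.PosDef)
    (S : Fin Nv → Matrix (Fin m) (Fin n) ℝ)
    (α β : Fin Nv → ℝ) (hα : ∀ v, 0 ≤ α v) (hβ : ∀ v, 0 < β v)
    (hLMI : ∀ v : Fin Nv,
      (Matrix.fromBlocks (-(β v • (1 : Matrix (Fin n) (Fin n) ℝ)))
          (contStack (ω v) P (S v))ᵀ (contStack (ω v) P (S v)) 0
        - α v • psiMat Xm Xδ U Θd Φ11 Φ12 Φ22).PosSemidef) :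
    ∀ (A : Fin L → Matrix (Fin n) (Fin n) ℝ) (B : Matrix (Fin n) (Fin m) ℝ),
      (Φ11 + (Xδ - plantZ A B * dataH Θd Xm U) * Φ12ᵀ
          + Φ12 * (Xδ - plantZ A B * dataH Θd Xm U)ᵀ
          + (Xδ - plantZ A B * dataH Θd Xm U) * Φ22
            * (Xδ - plantZ A B * dataH Θd Xm U)ᵀ).PosSemidef →
      ∀ θ ∈ convexHull ℝ (Set.range ω), ∀ c : Fin Nv → ℝ,
        (∀ v, 0 ≤ c v) → (∑ v, c v) = 1 → (∑ v, c v • ω v) = θ →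
        (-(((∑ ℓ, θ ℓ • A ℓ) + B * (∑ v, c v • (S v * P⁻¹))) * P
            + P * ((∑ ℓ, θ ℓ • A ℓ) + B * (∑ v, c v • (S v * P⁻¹)))ᵀ)).PosDef :=
  stmt15_general Xm Xδ U Θd Φ11 Φ12 Φ22 ω P hP S α β hα hβ hLMI
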